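/- Equality case of the sensitivity bound: let P_X be a full-support distribution on a finite alphabet 𝒳 with p_min = min_x P_X(x), let 0 < β < 2·p_min, and let P_{Y|X} be a mechanism with ε_min(P_{Y|X}, P_X) = ε, where ε ≤ −log p_min, such that for every y with P_Y(y) > 0 there exists x ∈ 𝒳 with P_{Y|X=x}(y) = 0. Then S_{P_X}(P_{Y|X}, B_β(P_X)) = −log( 1 − (β/2)·e^ε ). -/
import Mathlib


open Finset Real

/-- A full-support probability distribution on a finite alphabet. -/
def FullSupport {X : Type*} [Fintype X] (p : X → ℝ) : Prop :=
  (∀ x, 0 < p x) ∧ ∑ x, p x = 1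

/-- A privacy mechanism: a row-stochastic kernel. -/
def IsMech {X Y : Type*} [Fintype Y] (W : X → Y → ℝ) : Prop :=
  (∀ x y, 0 ≤ W x y) ∧ ∀ x, ∑ y, W x y = 1

/-- The output distribution `P_Y = P_{Y|X} ∘ P_X`. -/
noncomputable def outDist {X Y : Type*} [Fintype X] (W : X → Y → ℝ) (p : X → ℝ) (y : Y) : ℝ :=
  ∑ x, p x * W x y

/-- Pointwise maximal leakage to an outcome `y`. -/
noncomputable def leak {X Y : Type*} [Fintype X] [Nonempty X] (W : X → Y → ℝ) (p : X → ℝ)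
    (y : Y) : ℝ :=
  Real.log ((⨆ x, W x y) / outDist W p y)

/-- `ε_min`: the maximal leakage over outputs with positive probability. -/
noncomputable def epsMin {X Y : Type*} [Fintype X] [Nonempty X] (W : X → Y → ℝ)
    (p : X → ℝ) : ℝ :=
  sSup {r : ℝ | ∃ y, 0 < outDist W p y ∧ r = leak W p y}

section Helpers
variable {X Y : Type*} [Fintype X] [Fintype Y] [Nonempty X]

lemma myInf_pos (p : X → ℝ) (hp : ∀ x, 0 < p x) : 0 < ⨅ x, p x := by
  obtain ⟨x, hx⟩ := exists_eq_ciInf_of_finite (f := p)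
  rw [← hx]; exact hp x

lemma W_le_M (W : X → Y → ℝ) (y : Y) (x : X) : W x y ≤ ⨆ x, W x y :=
  le_ciSup (Set.Finite.bddAbove (Set.finite_range fun x => W x y)) x

lemma M_nonneg (W : X → Y → ℝ) (hW : IsMech W) (y : Y) : 0 ≤ ⨆ x, W x y :=
  le_trans (hW.1 (Classical.arbitrary X) y) (W_le_M W y _)

/-- If `outDist` is positive then the column max is positive. -/
lemma M_pos (W : X → Y → ℝ) (hW : IsMech W) (p : X → ℝ) (hp : ∀ x, 0 ≤ p x) (y : Y)
    (h : 0 < outDist W p y) : 0 < ⨆ x, W x y := by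
  by_contra hM
  push_neg at hM
  have : outDist W p y ≤ 0 := by
    apply Finset.sum_nonpos
    intro x _
    have h1 : W x y ≤ 0 := le_trans (W_le_M W y x) hM
    have h2 : W x y = 0 := le_antisymm h1 (hW.1 x y)
    simp [h2]
  linarith

/-- `pmin * M ≤ outDist`. -/
lemma pmin_M_le_outDist (W : X → Y → ℝ) (hW : IsMech W) (p : X → ℝ) (hp : ∀ x, 0 < p x)
    (y : Y) : (⨅ x, p x) * (⨆ x, W x y) ≤ outDist W p y := by
  obtain ⟨x, hx⟩ := exists_eq_ciSup_of_finite (f := fun x => W x y)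
  rw [← hx]
  have h1 : (⨅ x, p x) * W x y ≤ p x * W x y :=
    mul_le_mul_of_nonneg_right (ciInf_le (Set.Finite.bddBelow (Set.finite_range p)) x) (hW.1 x y)
  refine le_trans h1 ?_
  exact Finset.single_le_sum (f := fun x => p x * W x y)
    (fun i _ => mul_nonneg (hp i).le (hW.1 i y)) (Finset.mem_univ x)

lemma leak_le_of_pos (W : X → Y → ℝ) (hW : IsMech W) (p : X → ℝ) (hp : ∀ x, 0 < p x)
    (y : Y) (h : 0 < outDist W p y) : leak W p y ≤ -Real.log (⨅ x, p x) := by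
  have hm : 0 < ⨅ x, p x := myInf_pos p hp
  have hM : 0 < ⨆ x, W x y := M_pos W hW p (fun x => (hp x).le) y h
  have key : (⨆ x, W x y) / outDist W p y ≤ 1 / (⨅ x, p x) := by
    rw [div_le_div_iff₀ h hm]
    calc (⨆ x, W x y) * (⨅ x, p x) = (⨅ x, p x) * (⨆ x, W x y) := mul_comm _ _
    _ ≤ outDist W p y := pmin_M_le_outDist W hW p hp y
    _ = 1 * outDist W p y := (one_mul _).symm
  calc leak W p y ≤ Real.log (1 / (⨅ x, p x)) :=
        Real.log_le_log (div_pos hM h) key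
  _ = -Real.log (⨅ x, p x) := by rw [one_div, Real.log_inv]

lemma epsSet_nonempty (W : X → Y → ℝ) (hW : IsMech W) (p : X → ℝ) (hp : FullSupport p) :
    ∃ y, 0 < outDist W p y := by
  by_contra h
  push_neg at h
  have hsum : ∑ y, outDist W p y = 1 := by
    unfold outDist
    rw [Finset.sum_comm]
    simp only [← Finset.mul_sum, hW.2, mul_one]
    exact hp.2
  have : ∑ y, outDist W p y ≤ 0 := Finset.sum_nonpos (fun y _ => h y)
  linarith

lemma epsSet_bdd (W : X → Y → ℝ) (hW : IsMech W) (p : X → ℝ) (hp : FullSupport p) :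
    ∀ r ∈ {r : ℝ | ∃ y, 0 < outDist W p y ∧ r = leak W p y}, r ≤ -Real.log (⨅ x, p x) := by
  rintro r ⟨y, hy, rfl⟩
  exact leak_le_of_pos W hW p hp.1 y hy

lemma leak_le_epsMin (W : X → Y → ℝ) (hW : IsMech W) (p : X → ℝ) (hp : FullSupport p)
    (y : Y) (hy : 0 < outDist W p y) : leak W p y ≤ epsMin W p :=
  le_csSup ⟨_, epsSet_bdd W hW p hp⟩ ⟨y, hy, rfl⟩

lemma epsMin_attained (W : X → Y → ℝ) (hW : IsMech W) (p : X → ℝ) (hp : FullSupport p) :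
    ∃ y, 0 < outDist W p y ∧ epsMin W p = leak W p y := by
  have hne : {r : ℝ | ∃ y, 0 < outDist W p y ∧ r = leak W p y}.Nonempty := by
    obtain ⟨y, hy⟩ := epsSet_nonempty W hW p hp
    exact ⟨leak W p y, y, hy, rfl⟩
  have hfin : {r : ℝ | ∃ y, 0 < outDist W p y ∧ r = leak W p y}.Finite := by
    apply Set.Finite.subset (Set.finite_range (leak W p))
    rintro r ⟨y, _, rfl⟩
    exact ⟨y, rfl⟩
  exact hne.csSup_mem hfin

end Helpers

section Helpers
variable {X Y : Type*} [Fintype X] [Fintype Y] [Nonempty X]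

/-- Σ max(P x - Q x, 0) ≤ β/2 when both sum to 1 and ℓ1 distance ≤ β. -/
lemma sum_pospart_le (P Q : X → ℝ) (hP : ∑ x, P x = 1) (hQ : ∑ x, Q x = 1)
    (β : ℝ) (hd : ∑ x, |P x - Q x| ≤ β) :
    ∑ x, max (P x - Q x) 0 ≤ β / 2 := by
  have key : ∑ x, max (P x - Q x) 0 = ((∑ x, (P x - Q x)) + ∑ x, |P x - Q x|) / 2 := by
    rw [← Finset.sum_add_distrib]
    rw [Finset.sum_div]
    apply Finset.sum_congr rfl
    intro x _
    rcases le_total 0 (P x - Q x) with h | h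
    · rw [max_eq_left h, abs_of_nonneg h]; ring
    · rw [max_eq_right h, abs_of_nonpos h]; ring
  have hz : ∑ x, (P x - Q x) = 0 := by
    rw [Finset.sum_sub_distrib, hP, hQ]; ring
  rw [key, hz]
  linarith

/-- Key lower bound on the perturbed output distribution. -/
lemma outDist_perturb_ge (W : X → Y → ℝ) (hW : IsMech W) (P Q : X → ℝ)
    (hP : FullSupport P) (hQ : FullSupport Q) (β : ℝ) (hd : ∑ x, |P x - Q x| ≤ β)
    (hβ0 : 0 ≤ β) (y : Y) :
    outDist W P y - β / 2 * (⨆ x, W x y) ≤ outDist W Q y := by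
  have hM : 0 ≤ ⨆ x, W x y := M_nonneg W hW y
  have h1 : outDist W P y - outDist W Q y = ∑ x, (P x - Q x) * W x y := by
    unfold outDist
    rw [← Finset.sum_sub_distrib]
    apply Finset.sum_congr rfl; intro x _; ring
  have h2 : ∑ x, (P x - Q x) * W x y ≤ ∑ x, max (P x - Q x) 0 * (⨆ x, W x y) := by
    apply Finset.sum_le_sum
    intro x _
    rcases le_total (P x - Q x) 0 with h | h
    · calc (P x - Q x) * W x y ≤ 0 := mul_nonpos_of_nonpos_of_nonneg h (hW.1 x y)
      _ = 0 * (⨆ x, W x y) := by ring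
      _ ≤ max (P x - Q x) 0 * (⨆ x, W x y) :=
          mul_le_mul_of_nonneg_right (le_max_right _ _) hM
    · rw [max_eq_left h]
      exact mul_le_mul_of_nonneg_left (W_le_M W y x) h
  have h3 : ∑ x, max (P x - Q x) 0 * (⨆ x, W x y) ≤ β / 2 * (⨆ x, W x y) := by
    rw [← Finset.sum_mul]
    exact mul_le_mul_of_nonneg_right (sum_pospart_le P Q hP.2 hQ.2 β hd) hM
  linarith

/-- The per-output upper bound for arbitrary `Q` in the ball. -/
lemma key_upper (W : X → Y → ℝ) (hW : IsMech W) (P Q : X → ℝ)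
    (hP : FullSupport P) (hQ : FullSupport Q) (β ε : ℝ) (hβ0 : 0 ≤ β)
    (hd : ∑ x, |P x - Q x| ≤ β) (hc : 0 < 1 - β / 2 * Real.exp ε)
    (hleP : ∀ y, 0 < outDist W P y → leak W P y ≤ ε)
    (y : Y) (hy : 0 < outDist W Q y) :
    leak W Q y ≤ ε - Real.log (1 - β / 2 * Real.exp ε) := by
  set c := 1 - β / 2 * Real.exp ε with hcdef
  set M := ⨆ x, W x y with hMdef
  have hM : 0 < M := M_pos W hW Q (fun x => (hQ.1 x).le) y hy
  -- P_Y(y) > 0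
  have hPy : 0 < outDist W P y := by
    obtain ⟨x, hx⟩ := exists_eq_ciSup_of_finite (f := fun x => W x y)
    have hWx : 0 < W x y := by rw [hx]; exact hM
    have : 0 < P x * W x y := mul_pos (hP.1 x) hWx
    calc (0:ℝ) < P x * W x y := this
    _ ≤ outDist W P y := Finset.single_le_sum (f := fun x => P x * W x y)
        (fun i _ => mul_nonneg (hP.1 i).le (hW.1 i y)) (Finset.mem_univ x)
  -- M ≤ exp ε * P_Y
  have hMP : M ≤ Real.exp ε * outDist W P y := by
    have h1 : Real.log (M / outDist W P y) ≤ ε := hleP y hPy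
    have h2 : M / outDist W P y ≤ Real.exp ε := by
      rw [← Real.exp_log (div_pos hM hPy)]
      exact Real.exp_le_exp.2 h1
    rw [div_le_iff₀ hPy] at h2
    linarith [h2]
  -- Q_Y ≥ c * P_Y
  have hQy : outDist W P y - β / 2 * M ≤ outDist W Q y :=
    outDist_perturb_ge W hW P Q hP hQ β hd hβ0 y
  clear_value c M
  have hQc : c * outDist W P y ≤ outDist W Q y := by
    have : β / 2 * M ≤ β / 2 * (Real.exp ε * outDist W P y) :=
      mul_le_mul_of_nonneg_left hMP (by linarith)
    have heq : c * outDist W P y = outDist W P y - β / 2 * (Real.exp ε * outDist W P y) := by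
      rw [hcdef]; ring
    linarith
  -- conclude
  have hratio : M / outDist W Q y ≤ Real.exp ε / c := by
    rw [div_le_div_iff₀ hy hc]
    calc M * c = c * M := mul_comm _ _
    _ ≤ c * (Real.exp ε * outDist W P y) := mul_le_mul_of_nonneg_left hMP hc.le
    _ = Real.exp ε * (c * outDist W P y) := by ring
    _ ≤ Real.exp ε * outDist W Q y :=
        mul_le_mul_of_nonneg_left hQc (Real.exp_pos ε).le
  calc leak W Q y = Real.log (M / outDist W Q y) := by rw [hMdef]; rfl
  _ ≤ Real.log (Real.exp ε / c) := Real.log_le_log (div_pos hM hy) hratio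
  _ = ε - Real.log c := by rw [Real.log_div (Real.exp_ne_zero ε) hc.ne', Real.log_exp]

end Helpers
/-- Equality case of the sensitivity bound: if every positive-probability output column
of the mechanism contains a zero entry, then the local leakage sensitivity over the
ℓ1-ball equals `-log(1 - (β/2)·e^ε)`. -/
theorem stmt8 {X Y : Type*} [Fintype X] [Fintype Y] [Nonempty X]
    (P : X → ℝ) (hP : FullSupport P)
    (pmin : ℝ) (hpmin : pmin = ⨅ x, P x)
    (β : ℝ) (hβ0 : 0 < β) (hβ : β < 2 * pmin)
    (W : X → Y → ℝ) (hW : IsMech W)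
    (ε : ℝ) (hPML : epsMin W P = ε) (hε : ε ≤ -Real.log pmin)
    (hzero : ∀ y, 0 < outDist W P y → ∃ x, W x y = 0) :
    sSup {r : ℝ | ∃ Q : X → ℝ, FullSupport Q ∧ (∑ x, |P x - Q x|) ≤ β ∧
        r = epsMin W Q - epsMin W P} = -Real.log (1 - β / 2 * Real.exp ε) := by
  classical
  have hpminpos : 0 < pmin := by rw [hpmin]; exact myInf_pos P hP.1
  have hpm_le : ∀ x, pmin ≤ P x := fun x => by
    rw [hpmin]; exact ciInf_le (Set.Finite.bddBelow (Set.finite_range P)) x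
  have hexp : Real.exp ε ≤ 1 / pmin := by
    have h := Real.exp_le_exp.2 hε
    rwa [Real.exp_neg, Real.exp_log hpminpos, ← one_div] at h
  have hc : 0 < 1 - β / 2 * Real.exp ε := by
    have h1 : β / 2 * Real.exp ε ≤ β / 2 * (1 / pmin) :=
      mul_le_mul_of_nonneg_left hexp (by linarith)
    have h2 : β / 2 * (1 / pmin) < 1 := by
      rw [mul_one_div, div_div, div_lt_one (by positivity)]
      linarith
    linarith
  have hleP : ∀ y, 0 < outDist W P y → leak W P y ≤ ε := fun y hy =>
    hPML ▸ leak_le_epsMin W hW P hP y hy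
  -- upper bound for every Q in the ball
  have hub : ∀ Q : X → ℝ, FullSupport Q → (∑ x, |P x - Q x|) ≤ β →
      epsMin W Q ≤ ε - Real.log (1 - β / 2 * Real.exp ε) := by
    intro Q hQ hd
    apply csSup_le
    · obtain ⟨y, hy⟩ := epsSet_nonempty W hW Q hQ
      exact ⟨leak W Q y, y, hy, rfl⟩
    · rintro r ⟨y, hy, rfl⟩
      exact key_upper W hW P Q hP hQ β ε hβ0.le hd hc hleP y hy
  have hSub : ∀ r ∈ {r : ℝ | ∃ Q : X → ℝ, FullSupport Q ∧ (∑ x, |P x - Q x|) ≤ β ∧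
      r = epsMin W Q - epsMin W P}, r ≤ -Real.log (1 - β / 2 * Real.exp ε) := by
    rintro r ⟨Q, hQ, hd, rfl⟩
    have := hub Q hQ hd
    rw [hPML]; linarith
  -- lower bound: explicit perturbation
  obtain ⟨y0, hy0, hlk⟩ := epsMin_attained W hW P hP
  obtain ⟨x0, hx0⟩ := hzero y0 hy0
  obtain ⟨xs, hxs⟩ := exists_eq_ciSup_of_finite (f := fun x => W x y0)
  have hM0 : 0 < ⨆ x, W x y0 := M_pos W hW P (fun x => (hP.1 x).le) y0 hy0
  have hne : xs ≠ x0 := by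
    intro h
    have : (⨆ x, W x y0) = 0 := by rw [← hxs, h, hx0]
    linarith
  set Q : X → ℝ := fun x =>
      P x + (if x = x0 then β / 2 else 0) - (if x = xs then β / 2 else 0) with hQdef
  have hQval : ∀ x, Q x = P x + (if x = x0 then β / 2 else 0) -
      (if x = xs then β / 2 else 0) := fun x => rfl
  have hns : ¬ x0 = xs := fun h => hne h.symm
  have hQ0 : Q x0 = P x0 + β / 2 := by
    rw [hQval, if_pos rfl, if_neg hns]; ring
  have hQs : Q xs = P xs - β / 2 := by
    rw [hQval, if_pos rfl, if_neg hne]; ring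
  have hQo : ∀ x, ¬ x = x0 → ¬ x = xs → Q x = P x := by
    intro x h1 h2
    rw [hQval, if_neg h1, if_neg h2]; ring
  have hβ2 : β / 2 < pmin := by linarith
  have hQfs : FullSupport Q := by
    constructor
    · intro x
      by_cases h1 : x = x0
      · rw [h1, hQ0]; have := hP.1 x0; linarith
      · by_cases h2 : x = xs
        · rw [h2, hQs]; have := hpm_le xs; linarith
        · rw [hQo x h1 h2]; exact hP.1 x
    · have hsum : ∀ x, Q x = P x + ((if x = x0 then β / 2 else 0) -
          (if x = xs then β / 2 else 0)) := by intro x; rw [hQval]; ring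
      rw [Finset.sum_congr rfl (fun x _ => hsum x), Finset.sum_add_distrib,
          Finset.sum_sub_distrib,
          Finset.sum_ite_eq' Finset.univ x0 (fun _ => β / 2),
          Finset.sum_ite_eq' Finset.univ xs (fun _ => β / 2)]
      simp [hP.2]
  have hQl1 : (∑ x, |P x - Q x|) ≤ β := by
    have heq : ∀ x, |P x - Q x| =
        (if x = x0 then β / 2 else 0) + (if x = xs then β / 2 else 0) := by
      intro x
      by_cases h1 : x = x0
      · rw [h1, hQ0, if_pos rfl, if_neg hns]
        rw [show P x0 - (P x0 + β / 2) = -(β / 2) by ring, abs_neg,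
            abs_of_nonneg (by linarith)]
        ring
      · by_cases h2 : x = xs
        · rw [h2, hQs, if_neg hne, if_pos rfl]
          rw [show P xs - (P xs - β / 2) = β / 2 by ring, abs_of_nonneg (by linarith)]
          ring
        · rw [hQo x h1 h2, if_neg h1, if_neg h2, sub_self, abs_zero]; ring
    rw [Finset.sum_congr rfl (fun x _ => heq x), Finset.sum_add_distrib,
        Finset.sum_ite_eq' Finset.univ x0 (fun _ => β / 2),
        Finset.sum_ite_eq' Finset.univ xs (fun _ => β / 2)]
    simp
  have hMval : (⨆ x, W x y0) = Real.exp ε * outDist W P y0 := by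
    have hlk' : Real.log ((⨆ x, W x y0) / outDist W P y0) = ε := by
      rw [← hPML, hlk]; rfl
    have h : (⨆ x, W x y0) / outDist W P y0 = Real.exp ε := by
      rw [← hlk', Real.exp_log (div_pos hM0 hy0)]
    rw [← h]
    field_simp
  have hQout : outDist W Q y0 = (1 - β / 2 * Real.exp ε) * outDist W P y0 := by
    unfold outDist
    have h1 : ∀ x, Q x * W x y0 = P x * W x y0 +
        (if x = x0 then β / 2 * W x y0 else 0) - (if x = xs then β / 2 * W x y0 else 0) := by
      intro x
      rw [hQval]
      by_cases h1 : x = x0 <;> by_cases h2 : x = xs <;>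
        simp only [h1, h2, if_pos rfl, if_neg, if_true, if_false] <;>
        simp [h1, h2, hns, hne] <;> ring
    rw [Finset.sum_congr rfl (fun x _ => h1 x), Finset.sum_sub_distrib,
        Finset.sum_add_distrib,
        Finset.sum_ite_eq' Finset.univ x0 (fun x => β / 2 * W x y0),
        Finset.sum_ite_eq' Finset.univ xs (fun x => β / 2 * W x y0)]
    simp only [Finset.mem_univ, if_pos, hx0, mul_zero]
    have h2 : outDist W P y0 = ∑ x, P x * W x y0 := rfl
    rw [hxs, ← h2, hMval]
    ring
  have hQypos : 0 < outDist W Q y0 := by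
    rw [hQout]; exact mul_pos hc hy0
  have hlkQ : leak W Q y0 = ε - Real.log (1 - β / 2 * Real.exp ε) := by
    unfold leak
    rw [hQout, hMval]
    rw [show Real.exp ε * outDist W P y0 / ((1 - β / 2 * Real.exp ε) * outDist W P y0)
        = Real.exp ε / (1 - β / 2 * Real.exp ε) from by
      rw [mul_comm (1 - β / 2 * Real.exp ε) (outDist W P y0), ← div_div,
          mul_div_assoc, div_self hy0.ne', mul_one]]
    rw [Real.log_div (Real.exp_ne_zero ε) hc.ne', Real.log_exp]
  have hQeps : ε - Real.log (1 - β / 2 * Real.exp ε) ≤ epsMin W Q :=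
    hlkQ ▸ leak_le_epsMin W hW Q hQfs y0 hQypos
  apply le_antisymm
  · exact csSup_le ⟨0, P, hP, by simp [hβ0.le], by ring⟩ hSub
  · have hmem : (epsMin W Q - epsMin W P) ∈ {r : ℝ | ∃ Q : X → ℝ, FullSupport Q ∧
        (∑ x, |P x - Q x|) ≤ β ∧ r = epsMin W Q - epsMin W P} := ⟨Q, hQfs, hQl1, rfl⟩
    have h2 : -Real.log (1 - β / 2 * Real.exp ε) ≤ epsMin W Q - epsMin W P := by
      rw [hPML]; linarith
    exact le_trans h2 (le_csSup ⟨_, hSub⟩ hmem)
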